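/- The map (w₁ ≥_R w₂ ≥_R ⋯ ≥_R w_m) ↦ (c w₁⁻¹, w₁w₂⁻¹, …, w_{m−1}w_m⁻¹, w_m) is a bijection between m-multichains in the noncrossing partition lattice NC(W,c) and sequences (δ₀, δ₁, …, δ_m) of elements of NC(W,c) satisfying δ₀δ₁⋯δ_m = c and Σᵢ ℓ_R(δᵢ) = ℓ_R(c), with inverse (δ₀,…,δ_m) ↦ (δ₁⋯δ_m ≥_R δ₂⋯δ_m ≥_R ⋯ ≥_R δ_m). -/

import Mathlib

namespace CoxeterSystem

variable {B W : Type*} [Group W] {M : CoxeterMatrix B} (cs : CoxeterSystem M W)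

/-- The absolute (reflection) length of `w`: the minimal length of an expression of `w`
as a product of reflections. -/
noncomputable def absLength (w : W) : ℕ :=
  sInf {n : ℕ | ∃ l : List W, (∀ t ∈ l, cs.IsReflection t) ∧ l.prod = w ∧ l.length = n}

/-- The absolute order on `W`: `u ≤_R w` iff `ℓ_R(u) + ℓ_R(u⁻¹w) = ℓ_R(w)`. -/
def absLe (u w : W) : Prop :=
  cs.absLength u + cs.absLength (u⁻¹ * w) = cs.absLength w

/-- `c` is a (standard) Coxeter element: the product of all the simple reflections, each
occurring exactly once, in some order. -/
def IsCoxeterElement (c : W) : Prop :=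
  ∃ l : List B, l.Nodup ∧ (∀ i : B, i ∈ l) ∧ cs.wordProd l = c

end CoxeterSystem

namespace CoxeterSystem

variable {B W : Type*} [Group W] {M : CoxeterMatrix B} (cs : CoxeterSystem M W)

/-- The set of `m`-multichains `w₁ ≥_R w₂ ≥_R ⋯ ≥_R w_m` in the noncrossing partition
lattice `NC(W, c)`, recorded as functions `Fin m → W` (so `w j` is `w_{j+1}`). -/
def multichainSet (m : ℕ) (c : W) : Set (Fin m → W) :=
  {w | (∀ j : Fin m, cs.absLe (w j) c) ∧
    ∀ j k : Fin m, j ≤ k → cs.absLe (w k) (w j)}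

/-- The set of `m`-delta sequences `(δ₀, δ₁, …, δ_m)`: tuples of elements of
`NC(W, c)` with `δ₀ δ₁ ⋯ δ_m = c` and `Σᵢ ℓ_R(δᵢ) = ℓ_R(c)`. -/
def deltaSet (m : ℕ) (c : W) : Set (Fin (m + 1) → W) :=
  {δ | (∀ i : Fin (m + 1), cs.absLe (δ i) c) ∧ (List.ofFn δ).prod = c ∧
    (∑ i : Fin (m + 1), cs.absLength (δ i)) = cs.absLength c}

end CoxeterSystem

section Maps

variable {W : Type*} [Group W]

/-- The extension of an `m`-multichain `w` to indices `ℕ`, with `w₀ := c` and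
`w_k := 1` for `k > m`. -/
def chainExt (m : ℕ) (c : W) (w : Fin m → W) : ℕ → W := fun k =>
  if h : 1 ≤ k ∧ k ≤ m then w ⟨k - 1, by omega⟩ else if k = 0 then c else 1

/-- The map sending an `m`-multichain `(w₁ ≥_R ⋯ ≥_R w_m)` to the delta sequence
`(c w₁⁻¹, w₁ w₂⁻¹, …, w_{m−1} w_m⁻¹, w_m)`. -/
def chainToDelta (m : ℕ) (c : W) (w : Fin m → W) : Fin (m + 1) → W := fun i =>
  chainExt m c w i.val * (chainExt m c w (i.val + 1))⁻¹

/-- The map sending a delta sequence `(δ₀, …, δ_m)` to the multichain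
`(δ₁⋯δ_m, δ₂⋯δ_m, …, δ_m)`. -/
def deltaToChain (m : ℕ) (δ : Fin (m + 1) → W) : Fin m → W := fun j =>
  ((List.range' (j.val + 1) (m - j.val)).map
    (fun k => if h : k < m + 1 then δ ⟨k, h⟩ else 1)).prod

end Maps

/-!
Absolute length is subadditive and invariant under conjugation. Hence `u ≤_R v` gives
`ℓ_R(v u⁻¹) + ℓ_R(u) = ℓ_R(v)`, so along the extended chain `c = w₀ ≥_R w₁ ≥_R ⋯ ≥_R w_m ≥_R 1`
the lengths of the quotients `δᵢ = wᵢ w_{i+1}⁻¹` telescope to `ℓ_R(c)`, just as their product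
telescopes to `c`. Conversely, if `ℓ_R(δ₀ ⋯ δ_m) = Σ ℓ_R(δᵢ)`, then splitting the product into a
prefix `u` and a suffix `v` gives `ℓ_R(u v) = ℓ_R(u) + ℓ_R(v)`, and since `v⁻¹ (u v)` is conjugate
to `u` this says `v ≤_R u v`; so the suffix products form a multichain below `c`.
-/

namespace CoxeterSystem

variable {B W : Type*} [Group W] {M : CoxeterMatrix B} (cs : CoxeterSystem M W)

theorem absLength_prod_le_length {l : List W} (hl : ∀ t ∈ l, cs.IsReflection t) :
    cs.absLength l.prod ≤ l.length :=
  Nat.sInf_le ⟨l, hl, rfl, rfl⟩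

theorem exists_reflection_word_length_eq_absLength (w : W) :
    ∃ l : List W, (∀ t ∈ l, cs.IsReflection t) ∧ l.prod = w ∧ l.length = cs.absLength w := by
  refine Nat.sInf_mem (s := {n | ∃ l : List W, (∀ t ∈ l, cs.IsReflection t) ∧ l.prod = w ∧
    l.length = n}) ?_
  obtain ⟨ω, rfl⟩ := cs.wordProd_surjective w
  refine ⟨_, ω.map cs.simple, ?_, rfl, rfl⟩
  simp only [List.mem_map]
  rintro _ ⟨i, -, rfl⟩
  exact cs.isReflection_simple i

@[simp]
theorem absLength_one : cs.absLength (1 : W) = 0 :=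
  Nat.le_zero.mp (cs.absLength_prod_le_length (l := []) (by simp))

theorem absLength_mul_le (u v : W) :
    cs.absLength (u * v) ≤ cs.absLength u + cs.absLength v := by
  obtain ⟨l₁, hl₁, rfl, hlen₁⟩ := cs.exists_reflection_word_length_eq_absLength u
  obtain ⟨l₂, hl₂, rfl, hlen₂⟩ := cs.exists_reflection_word_length_eq_absLength v
  rw [← List.prod_append, ← hlen₁, ← hlen₂, ← List.length_append]
  exact cs.absLength_prod_le_length (by simpa [or_imp, forall_and] using ⟨hl₁, hl₂⟩)

theorem absLength_conj (u w : W) : cs.absLength (u * w * u⁻¹) = cs.absLength w := by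
  have conj_le : ∀ u w : W, cs.absLength (u * w * u⁻¹) ≤ cs.absLength w := by
    intro u w
    obtain ⟨l, hl, rfl, hlen⟩ := cs.exists_reflection_word_length_eq_absLength w
    rw [← MulAut.conj_apply, map_list_prod, ← hlen, ← List.length_map (MulAut.conj u)]
    refine cs.absLength_prod_le_length ?_
    simp only [List.mem_map]
    rintro _ ⟨t, ht, rfl⟩
    exact (hl t ht).conj u
  refine (conj_le u w).antisymm ?_
  simpa [mul_assoc] using conj_le u⁻¹ (u * w * u⁻¹)

theorem absLength_prod_le_sum (l : List W) :
    cs.absLength l.prod ≤ (l.map cs.absLength).sum := by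
  induction l with
  | nil => simp
  | cons a l ih => simpa using (cs.absLength_mul_le a l.prod).trans (by omega)

variable {cs}

theorem absLe_of_add_le {u w : W}
    (h : cs.absLength u + cs.absLength (u⁻¹ * w) ≤ cs.absLength w) : cs.absLe u w :=
  h.antisymm (by simpa using cs.absLength_mul_le u (u⁻¹ * w))

theorem one_absLe (w : W) : cs.absLe 1 w := by
  simp [absLe]

theorem absLe_refl (w : W) : cs.absLe w w := by
  simp [absLe]

theorem absLength_mul_inv_add_of_absLe {u v : W} (h : cs.absLe u v) :
    cs.absLength (v * u⁻¹) + cs.absLength u = cs.absLength v := by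
  have : cs.absLength (u⁻¹ * v) = cs.absLength (v * u⁻¹) := by
    simpa [mul_assoc] using cs.absLength_conj u⁻¹ (v * u⁻¹)
  unfold absLe at h
  omega

theorem absLe_mul_inv {u v c : W} (huv : cs.absLe u v) (hvc : cs.absLe v c) :
    cs.absLe (v * u⁻¹) c := by
  refine absLe_of_add_le ?_
  have hsplit : (v * u⁻¹)⁻¹ * c = u * (v⁻¹ * c) := by group
  have := cs.absLength_mul_le u (v⁻¹ * c)
  have := absLength_mul_inv_add_of_absLe huv
  unfold absLe at hvc
  rw [hsplit]
  omega

theorem absLe_mul_of_absLength_mul_eq_add {u v : W}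
    (h : cs.absLength (u * v) = cs.absLength u + cs.absLength v) : cs.absLe v (u * v) := by
  have : v⁻¹ * (u * v) = v⁻¹ * u * v⁻¹⁻¹ := by group
  rw [absLe, this, cs.absLength_conj, h, add_comm]

variable (cs)

def IsAbsLengthAdditive (l : List W) : Prop :=
  cs.absLength l.prod = (l.map cs.absLength).sum

variable {cs}

namespace IsAbsLengthAdditive

variable {l l₁ l₂ : List W}

theorem of_append (h : cs.IsAbsLengthAdditive (l₁ ++ l₂)) :
    cs.IsAbsLengthAdditive l₁ ∧ cs.IsAbsLengthAdditive l₂ := by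
  unfold IsAbsLengthAdditive at *
  rw [List.prod_append, List.map_append, List.sum_append] at h
  have := cs.absLength_mul_le l₁.prod l₂.prod
  have := cs.absLength_prod_le_sum l₁
  have := cs.absLength_prod_le_sum l₂
  omega

theorem absLength_prod_append (h : cs.IsAbsLengthAdditive (l₁ ++ l₂)) :
    cs.absLength (l₁.prod * l₂.prod) = cs.absLength l₁.prod + cs.absLength l₂.prod := by
  obtain ⟨h₁, h₂⟩ := h.of_append
  unfold IsAbsLengthAdditive at h h₁ h₂
  rw [← List.prod_append, h, h₁, h₂, List.map_append, List.sum_append]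

theorem drop (h : cs.IsAbsLengthAdditive l) (n : ℕ) : cs.IsAbsLengthAdditive (l.drop n) :=
  (of_append (l₁ := l.take n) (by rwa [List.take_append_drop])).2

theorem absLe_prod_drop (h : cs.IsAbsLengthAdditive l) (n : ℕ) :
    cs.absLe (l.drop n).prod l.prod := by
  rw [← List.take_append_drop n l] at h
  simpa [← List.prod_append] using absLe_mul_of_absLength_mul_eq_add h.absLength_prod_append

end IsAbsLengthAdditive

end CoxeterSystem

theorem List.prod_drop_ofFn_mul_inv {G : Type*} [Group G] (x : ℕ → G) {N a : ℕ} (h : a ≤ N) :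
    ((List.ofFn fun i : Fin N => x i * (x (i + 1))⁻¹).drop a).prod = x a * (x N)⁻¹ := by
  induction hn : N - a generalizing a with
  | zero =>
    obtain rfl : a = N := by omega
    rw [List.drop_of_length_le (by simp), List.prod_nil, mul_inv_cancel]
  | succ n ih =>
    rw [List.drop_eq_getElem_cons (by simp; omega), List.prod_cons, ih (by omega) (by omega)]
    simp

theorem List.drop_ofFn_eq_map_range' {α : Type*} (d : α) {N : ℕ} (f : Fin N → α) (a : ℕ) :
    (List.ofFn f).drop a = (List.range' a (N - a)).map fun k => if h : k < N then f ⟨k, h⟩ else d :=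
  List.ext_getElem (by simp) fun i h _ => by
    simp only [List.length_drop, List.length_ofFn] at h
    simp [show a + i < N by omega]

section ChainDelta

variable {W : Type*} [Group W] {m : ℕ} {c : W} {w : Fin m → W}

@[simp]
theorem chainExt_zero : chainExt m c w 0 = c := by
  simp [chainExt]

theorem chainExt_succ {j : ℕ} (hj : j < m) : chainExt m c w (j + 1) = w ⟨j, hj⟩ := by
  simp [chainExt, Nat.succ_le_of_lt hj]

theorem chainExt_of_lt {k : ℕ} (hk : m < k) : chainExt m c w k = 1 := by
  rw [chainExt, dif_neg (by omega), if_neg (by omega)]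

theorem deltaToChain_eq_prod_drop (δ : Fin (m + 1) → W) (j : Fin m) :
    deltaToChain m δ j = ((List.ofFn δ).drop (j + 1)).prod := by
  rw [List.drop_ofFn_eq_map_range' 1, Nat.add_sub_add_right]
  rfl

theorem deltaToChain_chainToDelta (w : Fin m → W) : deltaToChain m (chainToDelta m c w) = w := by
  funext j
  rw [deltaToChain_eq_prod_drop]
  refine (List.prod_drop_ofFn_mul_inv (chainExt m c w) (by omega)).trans ?_
  rw [chainExt_of_lt (lt_add_one m), chainExt_succ j.isLt, inv_one, mul_one]

theorem chainExt_deltaToChain {δ : Fin (m + 1) → W} (hδ : (List.ofFn δ).prod = c) {k : ℕ}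
    (hk : k ≤ m + 1) : chainExt m c (deltaToChain m δ) k = ((List.ofFn δ).drop k).prod := by
  rcases k with _ | k
  · rw [chainExt_zero, List.drop_zero, hδ]
  rcases Nat.lt_or_ge k m with hkm | hkm
  · rw [chainExt_succ hkm, deltaToChain_eq_prod_drop]
  · obtain rfl : k = m := by omega
    rw [chainExt_of_lt (lt_add_one _), List.drop_of_length_le (by simp), List.prod_nil]

theorem chainToDelta_deltaToChain {δ : Fin (m + 1) → W} (hδ : (List.ofFn δ).prod = c) :
    chainToDelta m c (deltaToChain m δ) = δ := by
  funext i
  have hi : i.val < (List.ofFn δ).length := by simpa using i.isLt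
  change chainExt m c (deltaToChain m δ) i * (chainExt m c (deltaToChain m δ) (i + 1))⁻¹ = δ i
  rw [chainExt_deltaToChain hδ (by omega), chainExt_deltaToChain hδ i.isLt,
    List.drop_eq_getElem_cons hi, List.prod_cons, mul_inv_cancel_right, List.getElem_ofFn]

end ChainDelta

namespace CoxeterSystem

variable {B W : Type*} [Group W] {M : CoxeterMatrix B} {cs : CoxeterSystem M W} {m : ℕ} {c : W}

theorem sum_absLength_mul_inv_add {x : ℕ → W} (hx : ∀ k, cs.absLe (x (k + 1)) (x k)) (n : ℕ) :
    ∑ i ∈ Finset.range n, cs.absLength (x i * (x (i + 1))⁻¹) + cs.absLength (x n) =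
      cs.absLength (x 0) := by
  induction n with
  | zero => simp
  | succ n ih => rw [Finset.sum_range_succ, add_assoc, absLength_mul_inv_add_of_absLe (hx n), ih]

theorem absLe_chainExt_succ {w : Fin m → W} (hw : w ∈ cs.multichainSet m c) (k : ℕ) :
    cs.absLe (chainExt m c w (k + 1)) (chainExt m c w k) := by
  rcases lt_or_ge m (k + 1) with hk | hk
  · rw [chainExt_of_lt hk]
    exact one_absLe _
  rcases k with _ | k
  · simpa [chainExt_succ hk] using hw.1 ⟨0, hk⟩
  · rw [chainExt_succ hk, chainExt_succ (by omega)]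
    exact hw.2 _ _ (by simp [Fin.le_def])

theorem chainExt_absLe {w : Fin m → W} (hw : w ∈ cs.multichainSet m c) (k : ℕ) :
    cs.absLe (chainExt m c w k) c := by
  rcases k with _ | k
  · simpa using absLe_refl c
  rcases lt_or_ge k m with hk | hk
  · rw [chainExt_succ hk]
    exact hw.1 _
  · rw [chainExt_of_lt (by omega)]
    exact one_absLe c

theorem chainToDelta_mem_deltaSet {w : Fin m → W} (hw : w ∈ cs.multichainSet m c) :
    chainToDelta m c w ∈ cs.deltaSet m c := by
  refine ⟨fun i => absLe_mul_inv (absLe_chainExt_succ hw i) (chainExt_absLe hw i), ?_, ?_⟩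
  · have := List.prod_drop_ofFn_mul_inv (chainExt m c w) (Nat.zero_le (m + 1))
    rwa [List.drop_zero, chainExt_zero, chainExt_of_lt (lt_add_one m), inv_one, mul_one] at this
  · have := sum_absLength_mul_inv_add (absLe_chainExt_succ hw) (m + 1)
    rw [chainExt_of_lt (lt_add_one m), absLength_one, add_zero, chainExt_zero] at this
    exact (Fin.sum_univ_eq_sum_range _ _).trans this

theorem isAbsLengthAdditive_ofFn_of_mem_deltaSet {δ : Fin (m + 1) → W}
    (hδ : δ ∈ cs.deltaSet m c) :
    cs.IsAbsLengthAdditive (List.ofFn δ) := by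
  rw [IsAbsLengthAdditive, hδ.2.1, ← hδ.2.2, List.map_ofFn, List.sum_ofFn]
  rfl

theorem deltaToChain_mem_multichainSet {δ : Fin (m + 1) → W} (hδ : δ ∈ cs.deltaSet m c) :
    deltaToChain m δ ∈ cs.multichainSet m c := by
  have hadd := isAbsLengthAdditive_ofFn_of_mem_deltaSet hδ
  refine ⟨fun j => ?_, fun j k hjk => ?_⟩
  · rw [deltaToChain_eq_prod_drop, ← hδ.2.1]
    exact hadd.absLe_prod_drop _
  · rw [deltaToChain_eq_prod_drop, deltaToChain_eq_prod_drop,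
      show (k : ℕ) + 1 = j + 1 + (k - j) by omega, ← List.drop_drop]
    exact (hadd.drop _).absLe_prod_drop _

end CoxeterSystem

theorem multichain_deltaSequence_bijection_general {B W : Type*} [Group W]
    (M : CoxeterMatrix B) (cs : CoxeterSystem M W) (m : ℕ) (c : W) :
    (∀ w ∈ cs.multichainSet m c, chainToDelta m c w ∈ cs.deltaSet m c) ∧
    (∀ δ ∈ cs.deltaSet m c, deltaToChain m δ ∈ cs.multichainSet m c) ∧
    (∀ w ∈ cs.multichainSet m c, deltaToChain m (chainToDelta m c w) = w) ∧
    (∀ δ ∈ cs.deltaSet m c, chainToDelta m c (deltaToChain m δ) = δ) :=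
  ⟨fun _ hw => CoxeterSystem.chainToDelta_mem_deltaSet hw,
    fun _ hδ => CoxeterSystem.deltaToChain_mem_multichainSet hδ,
    fun w _ => deltaToChain_chainToDelta w,
    fun _ hδ => chainToDelta_deltaToChain hδ.2.1⟩

/-- The map `(w₁ ≥_R ⋯ ≥_R w_m) ↦ (c w₁⁻¹, w₁w₂⁻¹, …, w_{m−1}w_m⁻¹, w_m)` is a bijection
between `m`-multichains in `NC(W, c)` and `m`-delta sequences, with inverse
`(δ₀, …, δ_m) ↦ (δ₁⋯δ_m ≥_R δ₂⋯δ_m ≥_R ⋯ ≥_R δ_m)`. -/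
theorem multichain_deltaSequence_bijection {B W : Type*} [Group W]
    (M : CoxeterMatrix B) (cs : CoxeterSystem M W) [Finite W] (m : ℕ) (c : W)
    (hc : cs.IsCoxeterElement c) :
    (∀ w ∈ cs.multichainSet m c, chainToDelta m c w ∈ cs.deltaSet m c) ∧
    (∀ δ ∈ cs.deltaSet m c, deltaToChain m δ ∈ cs.multichainSet m c) ∧
    (∀ w ∈ cs.multichainSet m c, deltaToChain m (chainToDelta m c w) = w) ∧
    (∀ δ ∈ cs.deltaSet m c, chainToDelta m c (deltaToChain m δ) = δ) :=
  multichain_deltaSequence_bijection_general M cs m c
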